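/- Let ζ ∈ k be a primitive n-th root of unity and let m, t be positive divisors of n with n ∤ mt; set N = n/gcd(n, mt). Let A = k[u]/(u^n − 1). Then there exists an H_n(ζ,m,t)-module-algebra structure (σ, δ) on A with σ(u) = ζ·u and δ ≠ 0 if and only if gcd(t, n/m) = 1. Moreover, whenever such a structure exists, necessarily δ(u) = γ·u^{t+1} for some nonzero γ ∈ k. -/

import Mathlib

open Finset

/-!
Put `q = ζ ^ m`, a primitive `d`-th root of unity for `d = n / m`, and
`[w]_q = 1 + q + ⋯ + q ^ (w - 1)`, which vanishes iff `d ∣ w`. The `σ`-eigenvectors of `A` are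
the multiples of the `u ^ j`, and `σ δ = ζ ^ t δ σ` makes `δ u` one of eigenvalue `ζ ^ (t + 1)`,
so `δ u = γ u ^ (t + 1)`. The skew Leibniz rule then gives
`δ ^ r (u ^ j) = γ ^ r ∏_{s < r} [j + s t]_q u ^ (j + r t)`, so `δ ^ N u = 0` forces
`d ∣ 1 + s t` for some `s`, whence `gcd(t, d) = 1`. Conversely, if `gcd(t, d) = 1` then `N = d`,
and the inner skew derivation `δ a = u ^ t (σ ^ m a - a) / (q - 1)` has `δ u = u ^ (t + 1)`;
it is nilpotent of order `d` since, `t` being a unit mod `d`, `d ∣ j + s t` for some `s < d`.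
-/

/-- An `H_n(ζ,m,t)`-module-algebra structure on `A`, given by the action `σ` of the
grouplike generator `y` and the action `δ` of the `(y^m,1)`-skew primitive `x`;
here `N = n / gcd(n, mt)` is the nilpotency order of `x`. -/
def IsHAction {k A : Type*} [Field k] [CommRing A] [Algebra k A]
    (n m t N : ℕ) (ζ : k) (σ : A ≃ₐ[k] A) (δ : A →ₗ[k] A) : Prop :=
  σ ^ n = 1 ∧ δ 1 = 0 ∧
  (∀ a c : A, δ (a * c) = (σ ^ m) a * δ c + δ a * c) ∧
  δ ^ N = 0 ∧
  σ.toLinearMap ∘ₗ δ = ζ ^ t • (δ ∘ₗ σ.toLinearMap)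

theorem IsPrimitiveRoot.geom_sum_eq_zero_iff_dvd {K : Type*} [Field K] {q : K} {d : ℕ}
    (hq : IsPrimitiveRoot q d) (hd : 1 < d) (w : ℕ) :
    ∑ i ∈ range w, q ^ i = 0 ↔ d ∣ w := by
  have hq1 := hq.ne_one hd
  rw [geom_sum_eq hq1, div_eq_zero_iff, sub_eq_zero, sub_eq_zero, or_iff_left hq1,
    hq.pow_eq_one_iff_dvd]

theorem Nat.exists_lt_dvd_add_mul {t d : ℕ} (h : t.Coprime d) (hd : 0 < d) (j : ℕ) :
    ∃ s < d, d ∣ j + s * t := by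
  have : NeZero d := ⟨hd.ne'⟩
  have ht : IsUnit (t : ZMod d) := (ZMod.isUnit_iff_coprime t d).mpr h
  refine ⟨(-j * (t : ZMod d)⁻¹ : ZMod d).val, ZMod.val_lt _, ?_⟩
  rw [← ZMod.natCast_eq_zero_iff]
  push_cast
  rw [ZMod.natCast_val, ZMod.cast_id, mul_assoc, ZMod.inv_mul_of_unit _ ht]
  ring

section SkewDerivation

variable {k A : Type*} [CommRing k] [CommRing A] [Algebra k A]

theorem AlgEquiv.pow_apply_of_apply_eq_smul {σ : A ≃ₐ[k] A} {u : A} {c : k} (h : σ u = c • u)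
    (s : ℕ) : (σ ^ s) u = c ^ s • u := by
  induction s with
  | zero => simp
  | succ s ih => rw [pow_succ', AlgEquiv.mul_apply, ih, map_smul, h, smul_smul, ← pow_succ]

theorem map_one_eq_zero_of_skew_leibniz {F : Type*} [FunLike F A A] [MonoidHomClass F A A] {τ : F}
    {δ : A →ₗ[k] A} (hδ : ∀ a c, δ (a * c) = τ a * δ c + δ a * c) : δ 1 = 0 := by
  simpa using hδ 1 1

variable {F : Type*} [FunLike F A A] [MonoidHomClass F A A] {τ : F} {δ : A →ₗ[k] A}
  {u : A} {q γ : k} {t : ℕ}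

theorem apply_pow_of_skew_leibniz (hδ : ∀ a c, δ (a * c) = τ a * δ c + δ a * c)
    (hτ : τ u = q • u) (hδu : δ u = γ • u ^ (t + 1)) (j : ℕ) :
    δ (u ^ j) = (γ * ∑ i ∈ range j, q ^ i) • u ^ (j + t) := by
  induction j with
  | zero => simp [map_one_eq_zero_of_skew_leibniz hδ]
  | succ j ih =>
    rw [pow_succ, hδ, map_pow, hτ, hδu, ih, smul_pow, sum_range_succ, smul_mul_smul_comm,
      smul_mul_assoc, ← pow_add, ← pow_succ, mul_add, add_smul, mul_comm (q ^ j)]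
    ring_nf

theorem pow_apply_pow_of_skew_leibniz (hδ : ∀ a c, δ (a * c) = τ a * δ c + δ a * c)
    (hτ : τ u = q • u) (hδu : δ u = γ • u ^ (t + 1)) (r j : ℕ) :
    (δ ^ r) (u ^ j) =
      (γ ^ r * ∏ s ∈ range r, ∑ i ∈ range (j + s * t), q ^ i) • u ^ (j + r * t) := by
  induction r with
  | zero => simp
  | succ r ih =>
    rw [pow_succ', Module.End.mul_apply, ih, map_smul, apply_pow_of_skew_leibniz hδ hτ hδu,
      prod_range_succ, smul_smul, show j + r * t + t = j + (r + 1) * t by ring]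
    congr 1
    ring

end SkewDerivation

section InnerSkewDerivation

variable {k A : Type*} [CommRing k] [CommRing A] [Algebra k A]

noncomputable def innerSkewDerivation (τ : A →ₐ[k] A) (c : A) : A →ₗ[k] A :=
  LinearMap.mulLeft k c ∘ₗ (τ.toLinearMap - LinearMap.id)

variable (τ : A →ₐ[k] A) (c : A)

theorem innerSkewDerivation_apply (a : A) : innerSkewDerivation τ c a = c * (τ a - a) := rfl

theorem innerSkewDerivation_mul (a b : A) :
    innerSkewDerivation τ c (a * b) =
      τ a * innerSkewDerivation τ c b + innerSkewDerivation τ c a * b := by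
  simp only [innerSkewDerivation_apply, map_mul]
  ring

theorem comp_innerSkewDerivation {σ : A ≃ₐ[k] A} {μ : k} (hστ : ∀ a, σ (τ a) = τ (σ a))
    (hσc : σ c = μ • c) :
    σ.toLinearMap ∘ₗ innerSkewDerivation τ c = μ • (innerSkewDerivation τ c ∘ₗ σ.toLinearMap) := by
  ext a
  simp [innerSkewDerivation_apply, hστ, hσc]

end InnerSkewDerivation

namespace PowerBasis

variable {k A : Type*} [Field k] [CommRing A] [Algebra k A] (pb : PowerBasis k A)

theorem algEquiv_ext {σ σ' : A ≃ₐ[k] A} (h : σ pb.gen = σ' pb.gen) : σ = σ' :=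
  AlgEquiv.coe_toAlgHom_injective (pb.algHom_ext h)

theorem linearMap_ext {f g : A →ₗ[k] A} (h : ∀ j, f (pb.gen ^ j) = g (pb.gen ^ j)) : f = g :=
  pb.basis.ext fun i => by rw [pb.basis_eq_pow, h]

variable {pb} (hu : pb.gen ^ pb.dim = 1)
include hu

theorem minpoly_gen_eq_X_pow_sub_one [Nontrivial A] :
    minpoly k pb.gen = Polynomial.X ^ pb.dim - 1 := by
  have hX := Polynomial.monic_X_pow_sub_C (1 : k) pb.dim_pos.ne'
  rw [map_one] at hX
  refine (Polynomial.eq_of_monic_of_dvd_of_natDegree_le (minpoly.monic pb.isIntegral_gen) hX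
    (minpoly.dvd k pb.gen (by simp [hu])) ?_).symm
  rw [pb.natDegree_minpoly, ← map_one Polynomial.C, Polynomial.natDegree_X_pow_sub_C]

theorem aeval_smul_gen_minpoly [Nontrivial A] {c : k} (hc : c ^ pb.dim = 1) :
    Polynomial.aeval (c • pb.gen) (minpoly k pb.gen) = 0 := by
  simp [minpoly_gen_eq_X_pow_sub_one hu, smul_pow, hc, hu]

theorem gen_pow_eq_basis [Nontrivial A] (j : ℕ) :
    pb.gen ^ j = pb.basis ⟨j % pb.dim, Nat.mod_lt j pb.dim_pos⟩ := by
  rw [pb.basis_eq_pow, ← pow_eq_pow_mod j hu]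

theorem smul_gen_pow_eq_zero_iff [Nontrivial A] {c : k} {j : ℕ} : c • pb.gen ^ j = 0 ↔ c = 0 := by
  rw [gen_pow_eq_basis hu, smul_eq_zero, or_iff_left (pb.basis.ne_zero _)]

noncomputable def scaleGenEquiv [Nontrivial A] (c : k) (hc : c ^ pb.dim = 1) : A ≃ₐ[k] A :=
  have hc0 : c ≠ 0 := by rintro rfl; simp [pb.dim_pos.ne'] at hc
  have hc' : c⁻¹ ^ pb.dim = 1 := by rw [inv_pow, hc, inv_one]
  AlgEquiv.ofAlgHom (pb.lift (c • pb.gen) (aeval_smul_gen_minpoly hu hc))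
    (pb.lift (c⁻¹ • pb.gen) (aeval_smul_gen_minpoly hu hc'))
    (pb.algHom_ext <| by simp [pb.lift_gen, smul_smul, inv_mul_cancel₀ hc0])
    (pb.algHom_ext <| by simp [pb.lift_gen, smul_smul, mul_inv_cancel₀ hc0])

theorem scaleGenEquiv_gen [Nontrivial A] (c : k) (hc : c ^ pb.dim = 1) :
    pb.scaleGenEquiv hu c hc pb.gen = c • pb.gen :=
  pb.lift_gen _ (aeval_smul_gen_minpoly hu hc)

theorem exists_eq_smul_gen_pow_of_apply_eq_smul [Nontrivial A] {ζ : k}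
    (hζ : IsPrimitiveRoot ζ pb.dim) {F : Type*} [FunLike F A A] [AlgHomClass F k A A] {σ : F}
    (hσ : σ pb.gen = ζ • pb.gen) {x : A} {j : ℕ} (hx : σ x = ζ ^ j • x) :
    ∃ c : k, x = c • pb.gen ^ j := by
  have hσx : σ x = ∑ i : Fin pb.dim, (pb.basis.repr x i * ζ ^ (i : ℕ)) • pb.basis i := by
    conv_lhs => rw [← pb.basis.sum_repr x]
    simp [pb.basis_eq_pow, hσ, smul_pow, smul_smul]
  have hcoord (l : Fin pb.dim) : pb.basis.repr x l * ζ ^ (l : ℕ) = ζ ^ j * pb.basis.repr x l := by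
    have h := congr(pb.basis.repr $(hσx.symm.trans hx) l)
    rwa [pb.basis.repr_sum_self, map_smul, Finsupp.smul_apply, smul_eq_mul] at h
  refine ⟨pb.basis.repr x ⟨j % pb.dim, Nat.mod_lt j pb.dim_pos⟩, pb.basis.ext_elem fun l => ?_⟩
  rw [gen_pow_eq_basis hu, map_smul, pb.basis.repr_self, Finsupp.smul_apply,
    Finsupp.single_apply]
  split_ifs with hl
  · rw [hl, smul_eq_mul, mul_one]
  · rw [smul_zero]
    by_contra hne
    refine hl (Fin.ext (hζ.pow_inj (Nat.mod_lt j pb.dim_pos) l.isLt ?_))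
    rw [← pow_eq_pow_mod j hζ.pow_eq_one]
    exact (mul_right_cancel₀ hne ((mul_comm _ _).trans (hcoord l))).symm

end PowerBasis

namespace IsHAction

variable {k A : Type*} [Field k] [CommRing A] [Algebra k A] [Nontrivial A] {pb : PowerBasis k A}
  (hu : pb.gen ^ pb.dim = 1) {ζ : k} (hζ : IsPrimitiveRoot ζ pb.dim) {m t N : ℕ}
  {σ : A ≃ₐ[k] A} {δ : A →ₗ[k] A}
include hu hζ

theorem exists_apply_gen_eq_smul (h : IsHAction pb.dim m t N ζ σ δ)
    (hσ : σ pb.gen = ζ • pb.gen) (hδ : δ ≠ 0) :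
    ∃ γ : k, γ ≠ 0 ∧ δ pb.gen = γ • pb.gen ^ (t + 1) := by
  obtain ⟨-, -, hLeib, -, hcomm⟩ := h
  have hσδ : σ (δ pb.gen) = ζ ^ (t + 1) • δ pb.gen := by
    have h := LinearMap.congr_fun hcomm pb.gen
    simp only [LinearMap.comp_apply, LinearMap.smul_apply, AlgEquiv.toLinearMap_apply] at h
    rw [h, hσ, map_smul, smul_smul, ← pow_succ]
  obtain ⟨γ, hγ⟩ := pb.exists_eq_smul_gen_pow_of_apply_eq_smul hu hζ hσ hσδ
  refine ⟨γ, ?_, hγ⟩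
  rintro rfl
  refine hδ (pb.linearMap_ext fun j => ?_)
  rw [apply_pow_of_skew_leibniz hLeib (AlgEquiv.pow_apply_of_apply_eq_smul hσ m) hγ j]
  simp

theorem coprime (h : IsHAction pb.dim m t N ζ σ δ) (hσ : σ pb.gen = ζ • pb.gen) (hδ : δ ≠ 0)
    (hmn : m ∣ pb.dim) : Nat.Coprime t (pb.dim / m) := by
  obtain ⟨γ, hγ, hδu⟩ := h.exists_apply_gen_eq_smul hu hζ hσ hδ
  obtain ⟨-, -, hLeib, hN, -⟩ := h
  have hd : pb.dim / m ≠ 0 :=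
    (Nat.div_pos (Nat.le_of_dvd pb.dim_pos hmn) (Nat.pos_of_dvd_of_pos hmn pb.dim_pos)).ne'
  rcases (Nat.one_le_iff_ne_zero.mpr hd).eq_or_lt with hd1 | hd1
  · rw [← hd1]
    exact Nat.coprime_one_right t
  have hq : IsPrimitiveRoot (ζ ^ m) (pb.dim / m) := hζ.pow pb.dim_pos (Nat.mul_div_cancel' hmn).symm
  have h0 := pow_apply_pow_of_skew_leibniz hLeib (AlgEquiv.pow_apply_of_apply_eq_smul hσ m) hδu N 1
  rw [hN, LinearMap.zero_apply, eq_comm, PowerBasis.smul_gen_pow_eq_zero_iff hu, mul_eq_zero,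
    or_iff_right (pow_ne_zero _ hγ), prod_eq_zero_iff] at h0
  obtain ⟨s, -, hs⟩ := h0
  rw [hq.geom_sum_eq_zero_iff_dvd hd1] at hs
  exact ((Nat.coprime_add_mul_right_right t 1 s).mpr (Nat.coprime_one_right t)).coprime_dvd_right hs

end IsHAction

theorem PowerBasis.exists_isHAction_of_coprime {k A : Type*} [Field k] [CommRing A] [Algebra k A]
    [Nontrivial A] {pb : PowerBasis k A} (hu : pb.gen ^ pb.dim = 1) {ζ : k}
    (hζ : IsPrimitiveRoot ζ pb.dim) {m t : ℕ} (hmn : m ∣ pb.dim) (hm : m < pb.dim)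
    (ht : Nat.Coprime t (pb.dim / m)) :
    ∃ (σ : A ≃ₐ[k] A) (δ : A →ₗ[k] A),
      IsHAction pb.dim m t (pb.dim / m) ζ σ δ ∧ σ pb.gen = ζ • pb.gen ∧ δ ≠ 0 := by
  have hq : IsPrimitiveRoot (ζ ^ m) (pb.dim / m) := hζ.pow pb.dim_pos (Nat.mul_div_cancel' hmn).symm
  have hq1 : ζ ^ m ≠ 1 := hζ.pow_ne_one_of_pos_of_lt (Nat.pos_of_dvd_of_pos hmn pb.dim_pos).ne' hm
  have hd : 1 < pb.dim / m := by
    refine lt_of_le_of_ne (Nat.div_pos hm.le (Nat.pos_of_dvd_of_pos hmn pb.dim_pos)) fun h => ?_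
    exact hq1 (IsPrimitiveRoot.one_right_iff.mp (h ▸ hq))
  set σ := pb.scaleGenEquiv hu ζ hζ.pow_eq_one
  have hσ : σ pb.gen = ζ • pb.gen := pb.scaleGenEquiv_gen hu _ _
  set δ := innerSkewDerivation (σ ^ m : A ≃ₐ[k] A).toAlgHom ((ζ ^ m - 1)⁻¹ • pb.gen ^ t)
  have hLeib : ∀ a c, δ (a * c) = (σ ^ m) a * δ c + δ a * c := innerSkewDerivation_mul _ _
  have hδu : δ pb.gen = (1 : k) • pb.gen ^ (t + 1) := by
    rw [innerSkewDerivation_apply, AlgEquiv.coe_toAlgHom, AlgEquiv.pow_apply_of_apply_eq_smul hσ]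
    rw [show ζ ^ m • pb.gen - pb.gen = (ζ ^ m - 1) • pb.gen by rw [sub_smul, one_smul],
      smul_mul_smul_comm, inv_mul_cancel₀ (sub_ne_zero.mpr hq1), ← pow_succ]
  refine ⟨σ, δ, ⟨?_, map_one_eq_zero_of_skew_leibniz hLeib, hLeib, ?_, ?_⟩, hσ, ?_⟩
  · refine pb.algEquiv_ext ?_
    rw [AlgEquiv.pow_apply_of_apply_eq_smul hσ, hζ.pow_eq_one, one_smul, AlgEquiv.one_apply]
  · refine pb.linearMap_ext fun j => ?_
    obtain ⟨s, hs, hdvd⟩ := Nat.exists_lt_dvd_add_mul ht (by omega) j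
    rw [pow_apply_pow_of_skew_leibniz hLeib (AlgEquiv.pow_apply_of_apply_eq_smul hσ m) hδu,
      prod_eq_zero (mem_range.mpr hs) ((hq.geom_sum_eq_zero_iff_dvd hd _).mpr hdvd)]
    simp
  · refine comp_innerSkewDerivation _ _ (fun a => ?_) ?_
    · change (σ * σ ^ m) a = (σ ^ m * σ) a
      rw [← pow_succ', pow_succ]
    · rw [map_smul, map_pow, hσ, smul_pow, smul_comm]
  · intro h
    refine one_ne_zero ((PowerBasis.smul_gen_pow_eq_zero_iff hu (j := t + 1)).mp ?_)
    rw [← hδu, h, LinearMap.zero_apply]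

theorem stmt_9_general (k : Type*) [Field k]
    (n : ℕ) (hn : 0 < n) (ζ : k) (hζ : IsPrimitiveRoot ζ n)
    (m t : ℕ) (hmn : m ∣ n)
    (hnmt : ¬ n ∣ m * t)
    (A : Type*) [CommRing A] [Algebra k A]
    (u : A) (b : Module.Basis (Fin n) k A) (hb : ∀ i : Fin n, b i = u ^ (i : ℕ))
    (hu : u ^ n = 1) :
    ((∃ (σ : A ≃ₐ[k] A) (δ : A →ₗ[k] A),
        IsHAction n m t (n / Nat.gcd n (m * t)) ζ σ δ ∧ σ u = ζ • u ∧ δ ≠ 0)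
      ↔ Nat.gcd t (n / m) = 1) ∧
    (∀ (σ : A ≃ₐ[k] A) (δ : A →ₗ[k] A),
        IsHAction n m t (n / Nat.gcd n (m * t)) ζ σ δ → σ u = ζ • u → δ ≠ 0 →
        ∃ γ : k, γ ≠ 0 ∧ δ u = γ • u ^ (t + 1)) := by
  let pb : PowerBasis k A := ⟨u, n, b, hb⟩
  have : Nontrivial A := nontrivial_of_ne _ _ (b.ne_zero ⟨0, hn⟩)
  have hm : m < n :=
    (Nat.le_of_dvd hn hmn).lt_of_ne fun h => hnmt (h ▸ dvd_mul_right m t)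
  refine ⟨⟨fun ⟨σ, δ, h, hσ, hδ⟩ => h.coprime (pb := pb) hu hζ hσ hδ hmn, fun ht => ?_⟩,
    fun σ δ h hσ hδ => h.exists_apply_gen_eq_smul (pb := pb) hu hζ hσ hδ⟩
  have hgcd : Nat.gcd n (m * t) = m := by
    rw [← Nat.mul_div_cancel' hmn, Nat.gcd_mul_left, Nat.gcd_comm, ht, mul_one]
  rw [hgcd]
  exact PowerBasis.exists_isHAction_of_coprime (pb := pb) hu hζ hmn hm ht

/-- On `A = k[u]/(uⁿ - 1)`, an `H_n(ζ,m,t)`-module-algebra structure `(σ, δ)` with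
`σ(u) = ζ·u` and `δ ≠ 0` exists iff `gcd(t, n/m) = 1`; moreover any such `δ` satisfies
`δ(u) = γ·u^(t+1)` for some nonzero `γ`. -/
theorem stmt_9 (k : Type*) [Field k] [IsAlgClosed k] [CharZero k]
    (n : ℕ) (hn : 0 < n) (ζ : k) (hζ : IsPrimitiveRoot ζ n)
    (m t : ℕ) (hm0 : 0 < m) (ht0 : 0 < t) (hmn : m ∣ n) (htn : t ∣ n)
    (hnmt : ¬ n ∣ m * t)
    (A : Type*) [CommRing A] [Algebra k A]
    (u : A) (b : Module.Basis (Fin n) k A) (hb : ∀ i : Fin n, b i = u ^ (i : ℕ))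
    (hu : u ^ n = 1) :
    ((∃ (σ : A ≃ₐ[k] A) (δ : A →ₗ[k] A),
        IsHAction n m t (n / Nat.gcd n (m * t)) ζ σ δ ∧ σ u = ζ • u ∧ δ ≠ 0)
      ↔ Nat.gcd t (n / m) = 1) ∧
    (∀ (σ : A ≃ₐ[k] A) (δ : A →ₗ[k] A),
        IsHAction n m t (n / Nat.gcd n (m * t)) ζ σ δ → σ u = ζ • u → δ ≠ 0 →
        ∃ γ : k, γ ≠ 0 ∧ δ u = γ • u ^ (t + 1)) :=
  stmt_9_general k n hn ζ hζ m t hmn hnmt A u b hb hu
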